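/- Let s ≥ 1, 1 ≤ k ≤ 2^s, i ≥ 1, with 2^s + k ≥ 2(i+k), and set n = 2^s + k. Define g1(p) = ((2k+2i)/n · p + 1 − (2k+2i)/n)·((2^s−2i)/(2^s−i) · p + 1 − (2^s−2i)/(2^s−i)) and g2(p) = ((2k/n)p + 1 − 2k/n)·p. Then g1(1/2) = g2(1/2), g1(1) = g2(1), g1 − g2 is convex, and hence g1(p) ≤ g2(p) for all 1/2 ≤ p ≤ 1. -/
import Mathlib


theorem stmt_6 (s k i : ℕ) (hs : 1 ≤ s) (hk1 : 1 ≤ k) (hk2 : k ≤ 2 ^ s)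
    (hi : 1 ≤ i) (hcap : 2 * (i + k) ≤ 2 ^ s + k) :
    let n : ℝ := 2 ^ s + k
    let g1 : ℝ → ℝ := fun p =>
      ((2*k + 2*i)/n * p + 1 - (2*k + 2*i)/n) *
      (((2:ℝ)^s - 2*i)/((2:ℝ)^s - i) * p + 1 - ((2:ℝ)^s - 2*i)/((2:ℝ)^s - i))
    let g2 : ℝ → ℝ := fun p => ((2*k/n) * p + 1 - 2*k/n) * p
    g1 (1/2) = g2 (1/2) ∧ g1 1 = g2 1 ∧
    ConvexOn ℝ Set.univ (fun p => g1 p - g2 p) ∧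
    ∀ p : ℝ, 1/2 ≤ p → p ≤ 1 → g1 p ≤ g2 p := by
  intro n g1 g2
  have hk : (1:ℝ) ≤ k := by exact_mod_cast hk1
  have hi' : (1:ℝ) ≤ i := by exact_mod_cast hi
  have hcap' : 2*((i:ℝ)+k) ≤ 2^s + k := by exact_mod_cast hcap
  have hn : (0:ℝ) < n := by
    have : (0:ℝ) < 2^s := by positivity
    simp only [n]; linarith
  have hd : (0:ℝ) < 2^s - i := by nlinarith
  have hne : n ≠ 0 := ne_of_gt hn
  have hdne : ((2:ℝ)^s - i) ≠ 0 := ne_of_gt hd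
  set c2 : ℝ := (2*k + 2*i)/n * (((2:ℝ)^s - 2*i)/((2:ℝ)^s - i)) - 2*k/n with hc2def
  have hc2 : 0 ≤ c2 := by
    have heq : c2 = 2*i*(2^s - k - 2*i)/(n*((2:ℝ)^s - i)) := by
      simp only [hc2def, n]; field_simp; ring
    rw [heq]
    apply div_nonneg
    · nlinarith
    · positivity
  have hf : ∀ p : ℝ, g1 p - g2 p = c2 * ((p - 1/2) * (p - 1)) := by
    intro p
    simp only [g1, g2, hc2def, n]
    field_simp
    ring
  refine ⟨?_, ?_, ?_, ?_⟩
  · have := hf (1/2)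
    simp at this; linarith [this]
  · have := hf 1
    simp at this; linarith [this]
  · refine ⟨convex_univ, fun x _ y _ a b ha hb hab => ?_⟩
    simp only [smul_eq_mul, hf]
    have hb' : b = 1 - a := by linarith
    subst hb'
    have key : a * (c2 * ((x - 1/2) * (x - 1))) + (1 - a) * (c2 * ((y - 1/2) * (y - 1)))
        - c2 * ((a*x + (1-a)*y - 1/2) * (a*x + (1-a)*y - 1))
        = c2 * (a * (1 - a) * (x - y)^2) := by ring
    have hnn : 0 ≤ c2 * (a * (1 - a) * (x - y)^2) :=
      mul_nonneg hc2 (mul_nonneg (mul_nonneg ha hb) (sq_nonneg (x - y)))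
    clear_value c2
    linarith
  · intro p hp1 hp2
    have := hf p
    nlinarith [mul_nonneg hc2 (mul_nonneg (by linarith : (0:ℝ) ≤ p - 1/2) (by linarith : (0:ℝ) ≤ 1 - p))]
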